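/- Commutant theorem: for every subgroup Λ of ZMod N × ZMod N, a linear operator A on ℂ^N satisfies A ∘ π(λ) = π(λ) ∘ A for all λ ∈ Λ if and only if A belongs to the linear span of {π(μ) : μ ∈ Λ°}. -/

import Mathlib

open Complex Finset

/-- The time-frequency shift `π(k,r)` on `ℂ^N ≅ (ZMod N → ℂ)`:
`(π(k,r)f)(j) = e^{2πi·rj/N} · f(j−k)`. -/
noncomputable def tfShift (N : ℕ) (k r : ZMod N) : (ZMod N → ℂ) →ₗ[ℂ] (ZMod N → ℂ) where
  toFun f := fun j => Complex.exp (2 * Real.pi * Complex.I * (((r * j).val : ℂ) / (N : ℂ))) * f (j - k)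
  map_add' f g := by
    funext j
    simp [mul_add]
  map_smul' c f := by
    funext j
    simp [Pi.smul_apply, smul_eq_mul]
    ring

/-- The inner product `⟨f,g⟩ = ∑ⱼ f(j)·conj(g(j))`, linear in the first argument. -/
noncomputable def inn {N : ℕ} [NeZero N] (f g : ZMod N → ℂ) : ℂ :=
  ∑ j, f j * starRingEnd ℂ (g j)

/-- The short-time Fourier transform `V_g f(k,r) = ⟨f, π(k,r)g⟩`. -/
noncomputable def stft {N : ℕ} [NeZero N] (g f : ZMod N → ℂ) (k r : ZMod N) : ℂ :=
  inn f (tfShift N k r g)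

/-- The adjoint subgroup `Λ° = {(k,r) : l·r − k·s = 0 in ZMod N for all (l,s) ∈ Λ}`,
as a set. -/
def adjSet {N : ℕ} (Λ : AddSubgroup (ZMod N × ZMod N)) : Set (ZMod N × ZMod N) :=
  {p | ∀ q ∈ Λ, q.1 * p.2 - p.1 * q.2 = 0}

/-- The underlying finite set of a subgroup `Λ` of `ZMod N × ZMod N`. -/
noncomputable def subFinset {N : ℕ} [NeZero N] (Λ : AddSubgroup (ZMod N × ZMod N)) :
    Finset (ZMod N × ZMod N) :=
  Set.Finite.toFinset (Set.toFinite (Λ : Set (ZMod N × ZMod N)))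

/-- The underlying finite set of the adjoint subgroup `Λ°`. -/
noncomputable def adjFinset {N : ℕ} [NeZero N] (Λ : AddSubgroup (ZMod N × ZMod N)) :
    Finset (ZMod N × ZMod N) :=
  Set.Finite.toFinset (Set.toFinite (adjSet Λ))

/-- The rank-one operator `f ↦ ⟨f,h⟩·g`. -/
noncomputable def rankOne {N : ℕ} [NeZero N] (g h : ZMod N → ℂ) :
    (ZMod N → ℂ) →ₗ[ℂ] (ZMod N → ℂ) where
  toFun f := inn f h • g
  map_add' f f' := by
    simp [inn, add_mul, Finset.sum_add_distrib, add_smul]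
  map_smul' c f := by
    simp [inn, Finset.mul_sum, mul_assoc, mul_smul, smul_smul]

/-- The Gabor frame-type operator `S_{g,h,Λ} f = ∑_{λ∈Λ} ⟨f, π(λ)h⟩ · π(λ)g`. -/
noncomputable def gaborTypeOp (N : ℕ) [NeZero N] (Λ : AddSubgroup (ZMod N × ZMod N))
    (g h : ZMod N → ℂ) : (ZMod N → ℂ) →ₗ[ℂ] (ZMod N → ℂ) :=
  ∑ lam ∈ subFinset Λ, rankOne (tfShift N lam.1 lam.2 g) (tfShift N lam.1 lam.2 h)

/-! The `N²` time-frequency shifts are linearly independent: on the `k`-th diagonal, a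
linear combination `∑ a(k,r) π(k,r)` acts by the discrete Fourier transform of `r ↦ a(k,r)`.
Counting dimensions, they form a basis of `End(ℂ^N)`. The commutation relation
`π(μ) π(λ) = e^{2πi(l r − k s)/N} π(λ) π(μ)` for `μ = (k,r)`, `λ = (l,s)` says that conjugation
by `π(λ)` is diagonal in this basis. An operator commuting with every `π(λ)`, `λ ∈ Λ`, is fixed
by all these conjugations, so its coordinates vanish off the shifts whose eigenvalues are all
`1`, i.e. off `Λ°`. -/

theorem Module.Basis.mem_span_image_of_apply_eq_self {ι κ R M : Type*} [CommRing R]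
    [IsDomain R] [AddCommGroup M] [Module R M] (b : Module.Basis ι R M) (T : κ → Module.End R M)
    (c : κ → ι → R) (hT : ∀ t i, T t (b i) = c t i • b i) {x : M} (hx : ∀ t, T t x = x) :
    x ∈ Submodule.span R (b '' {i | ∀ t, c t i = 1}) := by
  rw [b.mem_span_image]
  intro i hi t
  have hcoord : b.coord i ∘ₗ T t = c t i • b.coord i := b.ext fun j => by
    rcases eq_or_ne j i with rfl | hji
    · simp [hT]
    · simp [hT, hji]
  have hrepr : b.repr x i = c t i * b.repr x i := by
    simpa [hx] using LinearMap.congr_fun hcoord x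
  exact (mul_eq_right₀ (Finsupp.mem_support_iff.mp hi)).mp hrepr.symm

section TimeFrequencyShift

variable {N : ℕ} [NeZero N]

theorem tfShift_apply (k r : ZMod N) (f : ZMod N → ℂ) (j : ZMod N) :
    tfShift N k r f j = ZMod.stdAddChar (r * j) * f (j - k) := by
  simp [tfShift, ZMod.stdAddChar_apply, ZMod.toCircle_apply, mul_div_assoc]

theorem tfShift_mul_tfShift (k r l s : ZMod N) :
    tfShift N k r * tfShift N l s = ZMod.stdAddChar (-(k * s)) • tfShift N (k + l) (r + s) := by
  refine LinearMap.ext fun f => funext fun j => ?_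
  simp only [Module.End.mul_apply, LinearMap.smul_apply, Pi.smul_apply, smul_eq_mul,
    tfShift_apply]
  rw [sub_sub, ← mul_assoc, ← mul_assoc, ← AddChar.map_add_eq_mul, ← AddChar.map_add_eq_mul]
  ring_nf

theorem tfShift_mul_tfShift_comm (k r l s : ZMod N) :
    tfShift N k r * tfShift N l s =
      ZMod.stdAddChar (l * r - k * s) • (tfShift N l s * tfShift N k r) := by
  rw [tfShift_mul_tfShift, tfShift_mul_tfShift, smul_smul, ← AddChar.map_add_eq_mul, add_comm l,
    add_comm s]
  ring_nf

theorem tfShift_zero_zero : tfShift N 0 0 = 1 :=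
  LinearMap.ext fun f => funext fun j => by simp [tfShift_apply]

theorem isUnit_tfShift (k r : ZMod N) : IsUnit (tfShift N k r) := by
  refine IsUnit.of_mul_eq_one (ZMod.stdAddChar (-(k * r)) • tfShift N (-k) (-r)) ?_
  rw [mul_smul_comm, tfShift_mul_tfShift, smul_smul, ← AddChar.map_add_eq_mul, add_neg_cancel,
    add_neg_cancel, tfShift_zero_zero]
  simp

open ZMod in
theorem linearIndependent_tfShift :
    LinearIndependent ℂ fun p : ZMod N × ZMod N => tfShift N p.1 p.2 := by
  rw [Fintype.linearIndependent_iff]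
  intro a ha ⟨k, r⟩
  have hdiag : ∀ j, ∑ s, stdAddChar (s * j) * a (k, s) = 0 := by
    intro j
    have := congr_fun (LinearMap.congr_fun ha (Pi.single (j - k) 1)) j
    simpa [tfShift_apply, Fintype.sum_prod_type, Pi.single_apply, mul_comm] using this
  have hdft : 𝓕 (fun s => a (k, s)) = 0 := by
    funext j
    simpa [dft_apply, smul_eq_mul] using hdiag (-j)
  exact congr_fun ((map_eq_zero_iff _ dft.injective).mp hdft) r

variable (N) in
noncomputable def tfShiftBasis : Module.Basis (ZMod N × ZMod N) ℂ (Module.End ℂ (ZMod N → ℂ)) :=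
  basisOfLinearIndependentOfCardEqFinrank linearIndependent_tfShift <| by
    simp [Module.finrank_linearMap, Module.finrank_fintype_fun_eq_card]

theorem coe_tfShiftBasis : ⇑(tfShiftBasis N) = fun p => tfShift N p.1 p.2 :=
  coe_basisOfLinearIndependentOfCardEqFinrank _ _

theorem commute_tfShift_of_mem_adjSet {Λ : AddSubgroup (ZMod N × ZMod N)} {p q : ZMod N × ZMod N}
    (hp : p ∈ adjSet Λ) (hq : q ∈ Λ) : Commute (tfShift N p.1 p.2) (tfShift N q.1 q.2) := by
  rw [Commute, SemiconjBy, tfShift_mul_tfShift_comm, hp q hq, AddChar.map_zero_eq_one, one_smul]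

theorem span_adjSet_le_centralizer (Λ : AddSubgroup (ZMod N × ZMod N)) :
    Submodule.span ℂ ((fun p : ZMod N × ZMod N => tfShift N p.1 p.2) '' adjSet Λ) ≤
      Subalgebra.toSubmodule
        (Subalgebra.centralizer ℂ ((fun q : ZMod N × ZMod N => tfShift N q.1 q.2) '' Λ)) := by
  rw [Submodule.span_le]
  rintro _ ⟨p, hp, rfl⟩ _ ⟨q, hq, rfl⟩
  exact (commute_tfShift_of_mem_adjSet hp hq).symm.eq

theorem mem_span_adjSet_of_commute {Λ : AddSubgroup (ZMod N × ZMod N)}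
    {A : Module.End ℂ (ZMod N → ℂ)}
    (hA : ∀ q ∈ Λ, A * tfShift N q.1 q.2 = tfShift N q.1 q.2 * A) :
    A ∈ Submodule.span ℂ ((fun p : ZMod N × ZMod N => tfShift N p.1 p.2) '' adjSet Λ) := by
  choose u hu using fun q : Λ => isUnit_tfShift q.1.1 q.1.2
  have hconj := (tfShiftBasis N).mem_span_image_of_apply_eq_self
    (fun q => LinearMap.mulLeftRight ℂ (↑(u q)⁻¹, ↑(u q)))
    (fun q p => ZMod.stdAddChar (q.1.1 * p.2 - p.1 * q.1.2)) (fun q p => ?_) (x := A)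
    fun q => ?_
  · rw [coe_tfShiftBasis] at hconj
    refine Submodule.span_mono (Set.image_mono fun p hp q hq => ?_) hconj
    exact ZMod.injective_stdAddChar (by simpa using hp ⟨q, hq⟩)
  · rw [LinearMap.mulLeftRight_apply, coe_tfShiftBasis, mul_assoc, hu, tfShift_mul_tfShift_comm,
      mul_smul_comm, ← hu, Units.inv_mul_cancel_left]
  · rw [LinearMap.mulLeftRight_apply, mul_assoc, hu, hA _ q.2, ← hu, Units.inv_mul_cancel_left]

end TimeFrequencyShift

/-- **Commutant theorem**: a linear operator `A` on `ℂ^N` commutes with `π(λ)` for all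
`λ ∈ Λ` if and only if `A` belongs to the linear span of `{π(μ) : μ ∈ Λ°}`. -/
theorem commutant_eq_span_adjoint (N : ℕ) [NeZero N]
    (Λ : AddSubgroup (ZMod N × ZMod N)) (A : (ZMod N → ℂ) →ₗ[ℂ] (ZMod N → ℂ)) :
    (∀ lam ∈ Λ, A ∘ₗ tfShift N lam.1 lam.2 = tfShift N lam.1 lam.2 ∘ₗ A) ↔
      A ∈ Submodule.span ℂ
        ((fun p : ZMod N × ZMod N => tfShift N p.1 p.2) '' adjSet Λ) := by
  simp only [← Module.End.mul_eq_comp]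
  refine ⟨mem_span_adjSet_of_commute, fun hA q hq => ?_⟩
  exact ((Subalgebra.mem_centralizer_iff ℂ).mp (span_adjSet_le_centralizer Λ hA) _
    ⟨q, hq, rfl⟩).symm
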